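/- arXiv:2309.06798 — 2 statements merged into one kernel-verified Lean document; each statement's English description precedes it below -/
import Mathlib

section
/- Let d ≥ 1. There is a constant C = C(d) such that the following holds: if K > 0 and m : ℝ^d → ℝ is measurable with |m(x)| ≤ K (1+|x|)^{-d} (1+log(1+|x|))^{-1/2} for all x ∈ ℝ^d, then for every x ∈ ℝ^d the convolution integral (m⋆m)(x) = ∫_{ℝ^d} m(x−y) m(y) dy is absolutely convergent and satisfies |(m⋆m)(x)| ≤ C K² (1+|x|)^{-d}. -/
/-!
Write `g(t) = (1 + t)^{-d} (1 + log (1 + t))^{-1/2}`, a decreasing function. Whichever of `‖y‖`,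
`‖x - y‖` is the smaller, the other is at least `max (‖x‖ / 2, smaller)`, so
`g ‖x - y‖ * g ‖y‖ ≤ h y + h (x - y)` with the radial function `h y = g (max (‖x‖/2, ‖y‖)) g ‖y‖`,
and the convolution is at most `2 ∫ h`. In polar coordinates, with `ρ = ‖x‖ / 2`: on `r ≤ ρ` the
integrand `r^{d-1} g(ρ) g(r)` is at most `g(ρ) (1 + r)⁻¹ (1 + log (1 + r))^{-1/2}`, whose integral
`≤ 2 (1 + log (1 + ρ))^{1/2}` exactly cancels the logarithmic factor of `g(ρ)`; on `r > ρ` it is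
at most `(1 + r)^{-d-1}`. Both pieces are `O((1 + ρ)^{-d})`.
-/

open MeasureTheory Set Filter Metric Real Topology

noncomputable section

def logWeight (t : ℝ) : ℝ := 1 + log (1 + t)

def envelope (d : ℕ) (t : ℝ) : ℝ := (1 + t) ^ (-(d : ℝ)) * logWeight t ^ (-(1 / 2 : ℝ))

def cappedEnvelopeSq (d : ℕ) (ρ t : ℝ) : ℝ := envelope d (max ρ t) * envelope d t

end

lemma one_le_logWeight {t : ℝ} (ht : 0 ≤ t) : 1 ≤ logWeight t := by
  have := log_nonneg (by linarith : (1 : ℝ) ≤ 1 + t)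
  unfold logWeight; linarith

lemma logWeight_pos {t : ℝ} (ht : 0 ≤ t) : 0 < logWeight t :=
  one_pos.trans_le (one_le_logWeight ht)

lemma logWeight_monotoneOn : MonotoneOn logWeight (Ici 0) := fun s hs t _ hst => by
  have := log_le_log (by linarith [mem_Ici.1 hs]) (by linarith : 1 + s ≤ 1 + t)
  unfold logWeight; linarith

lemma hasDerivAt_logWeight {r : ℝ} (hr : -1 < r) : HasDerivAt logWeight (1 + r)⁻¹ r := by
  have h : 1 + r ≠ 0 := by linarith
  exact (((hasDerivAt_id r).const_add 1).log (by simpa using h)).const_add 1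
    |>.congr_deriv (by simp)

lemma envelope_nonneg (d : ℕ) {t : ℝ} (ht : 0 ≤ t) : 0 ≤ envelope d t := by
  have := logWeight_pos ht
  unfold envelope; positivity

lemma envelope_antitoneOn (d : ℕ) : AntitoneOn (envelope d) (Ici 0) := fun s hs t _ hst => by
  have hs' : (0 : ℝ) ≤ s := hs
  have := logWeight_pos hs'
  unfold envelope
  apply mul_le_mul _ _ (rpow_nonneg (logWeight_pos (hs'.trans hst)).le _) (by positivity)
  · exact rpow_le_rpow_of_nonpos (by positivity) (by linarith) (by simp)
  · exact rpow_le_rpow_of_nonpos this (logWeight_monotoneOn hs (hs'.trans hst) hst) (by norm_num)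

lemma envelope_le_rpow (d : ℕ) {t : ℝ} (ht : 0 ≤ t) : envelope d t ≤ (1 + t) ^ (-(d : ℝ)) := by
  unfold envelope
  apply mul_le_of_le_one_right (by positivity)
  exact rpow_le_one_of_one_le_of_nonpos (one_le_logWeight ht) (by norm_num)

lemma measurable_envelope (d : ℕ) : Measurable (envelope d) := by
  unfold envelope logWeight; fun_prop

lemma envelope_mul_rpow_logWeight (d : ℕ) {t : ℝ} (ht : 0 ≤ t) :
    envelope d t * logWeight t ^ (1 / 2 : ℝ) = (1 + t) ^ (-(d : ℝ)) := by
  rw [envelope, mul_assoc, ← rpow_add (logWeight_pos ht)]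
  norm_num

lemma continuousOn_inv_one_add_mul_logWeight_rpow :
    ContinuousOn (fun r => (1 + r)⁻¹ * logWeight r ^ (-(1 / 2 : ℝ))) (Ici 0) := by
  intro r (hr : 0 ≤ r)
  have h : 1 + r ≠ 0 := by linarith
  exact (((continuousAt_const.add continuousAt_id).inv₀ h).mul
    ((hasDerivAt_logWeight (by linarith)).continuousAt.rpow_const
      (Or.inl (logWeight_pos hr).ne'))).continuousWithinAt

lemma integral_inv_one_add_mul_logWeight_rpow {ρ : ℝ} (hρ : 0 ≤ ρ) :
    ∫ r in (0)..ρ, (1 + r)⁻¹ * logWeight r ^ (-(1 / 2 : ℝ))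
      = 2 * logWeight ρ ^ (1 / 2 : ℝ) - 2 := by
  have hderiv : ∀ r ∈ uIcc 0 ρ, HasDerivAt (fun t => 2 * logWeight t ^ (1 / 2 : ℝ))
      ((1 + r)⁻¹ * logWeight r ^ (-(1 / 2 : ℝ))) r := by
    intro r hr
    rw [uIcc_of_le hρ] at hr
    refine (((hasDerivAt_logWeight (by linarith [hr.1])).rpow_const
      (Or.inl (logWeight_pos hr.1).ne')).const_mul 2).congr_deriv ?_
    norm_num; ring
  have hcont : ContinuousOn (fun r => (1 + r)⁻¹ * logWeight r ^ (-(1 / 2 : ℝ))) (uIcc 0 ρ) :=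
    continuousOn_inv_one_add_mul_logWeight_rpow.mono (uIcc_of_le hρ ▸ Icc_subset_Ici_self)
  rw [intervalIntegral.integral_eq_sub_of_hasDerivAt hderiv hcont.intervalIntegrable]
  simp [logWeight]

lemma integral_Ioi_add_rpow_of_lt {a c m : ℝ} (ha : a < -1) (hc : -m < c) :
    ∫ t in Ioi c, (t + m) ^ a = -(c + m) ^ (a + 1) / (a + 1) := by
  have hderiv : ∀ t ∈ Ici c, HasDerivAt (fun t => (t + m) ^ (a + 1) / (a + 1)) ((t + m) ^ a) t := by
    intro t ht
    refine ((((hasDerivAt_id t).add_const m).rpow_const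
      (Or.inl (ne_of_gt (by simp; linarith [mem_Ici.1 ht])))).div_const _).congr_deriv ?_
    field_simp [show a + 1 ≠ 0 by linarith]
    simp
  have hlim : Tendsto (fun t => (t + m) ^ (a + 1) / (a + 1)) atTop (𝓝 0) := by
    rw [← zero_div (a + 1), ← neg_neg (a + 1)]
    exact ((tendsto_rpow_neg_atTop (by linarith)).comp
      (tendsto_atTop_add_const_right _ m tendsto_id)).div_const _
  rw [integral_Ioi_of_hasDerivAt_of_tendsto' hderiv (integrableOn_add_rpow_Ioi_of_lt ha hc) hlim]
  ring

lemma pow_pred_mul_one_add_rpow_neg_le {d : ℕ} (hd : 1 ≤ d) {r : ℝ} (hr : 0 ≤ r) (a : ℝ) :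
    r ^ (d - 1) * (1 + r) ^ (-a) ≤ (1 + r) ^ ((d : ℝ) - 1 - a) := by
  have h : 0 < 1 + r := by linarith
  calc r ^ (d - 1) * (1 + r) ^ (-a) ≤ (1 + r) ^ (d - 1) * (1 + r) ^ (-a) := by
        gcongr; linarith
    _ = (1 + r) ^ ((d : ℝ) - 1 - a) := by
        rw [← rpow_natCast, ← rpow_add h, Nat.cast_sub hd]
        ring_nf

lemma one_add_half_rpow_neg_le {t : ℝ} (ht : 0 ≤ t) {a : ℝ} (ha : 0 ≤ a) :
    (1 + t / 2) ^ (-a) ≤ 2 ^ a * (1 + t) ^ (-a) := by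
  calc (1 + t / 2) ^ (-a) ≤ ((1 + t) / 2) ^ (-a) :=
        rpow_le_rpow_of_nonpos (by positivity) (by linarith) (by linarith)
    _ = 2 ^ a * (1 + t) ^ (-a) := by
        rw [div_rpow (by positivity) (by norm_num), rpow_neg (by norm_num : (0 : ℝ) ≤ 2),
          div_eq_mul_inv, inv_inv, mul_comm]

section Profile

variable {d : ℕ} {ρ : ℝ}

lemma cappedEnvelopeSq_nonneg {r : ℝ} (hr : 0 ≤ r) : 0 ≤ cappedEnvelopeSq d ρ r :=
  mul_nonneg (envelope_nonneg d (hr.trans (le_max_right ρ r))) (envelope_nonneg d hr)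

lemma cappedEnvelopeSq_le_rpow {r : ℝ} (hr : 0 ≤ r) :
    cappedEnvelopeSq d ρ r ≤ (1 + r) ^ (-(2 * d : ℝ)) := by
  have hmax : envelope d (max ρ r) ≤ envelope d r :=
    envelope_antitoneOn d hr (hr.trans (le_max_right ρ r)) (le_max_right ρ r)
  calc cappedEnvelopeSq d ρ r ≤ (1 + r) ^ (-(d : ℝ)) * (1 + r) ^ (-(d : ℝ)) :=
        mul_le_mul (hmax.trans (envelope_le_rpow d hr)) (envelope_le_rpow d hr)
          (envelope_nonneg d hr) (by positivity)
    _ = (1 + r) ^ (-(2 * d : ℝ)) := by rw [← rpow_add (by linarith)]; ring_nf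

lemma pow_pred_mul_cappedEnvelopeSq_le (hd : 1 ≤ d) {r : ℝ} (hr : 0 ≤ r) :
    r ^ (d - 1) * cappedEnvelopeSq d ρ r ≤ (r + 1) ^ (-((d : ℝ) + 1)) :=
  calc r ^ (d - 1) * cappedEnvelopeSq d ρ r ≤ r ^ (d - 1) * (1 + r) ^ (-(2 * d : ℝ)) := by
        gcongr; exact cappedEnvelopeSq_le_rpow hr
    _ ≤ (1 + r) ^ ((d : ℝ) - 1 - 2 * d) := pow_pred_mul_one_add_rpow_neg_le hd hr _
    _ = (r + 1) ^ (-((d : ℝ) + 1)) := by rw [add_comm]; ring_nf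

lemma integrableOn_pow_pred_mul_cappedEnvelopeSq (hd : 1 ≤ d) :
    IntegrableOn (fun r => r ^ (d - 1) * cappedEnvelopeSq d ρ r) (Ioi 0) := by
  have hd' : (1 : ℝ) ≤ d := Nat.one_le_cast.2 hd
  refine (integrableOn_add_rpow_Ioi_of_lt (a := -((d : ℝ) + 1)) (m := 1) (by linarith)
    (by norm_num)).mono' ?_ ?_
  · have := measurable_envelope d
    exact Measurable.aestronglyMeasurable (by unfold cappedEnvelopeSq; fun_prop)
  · refine ae_restrict_of_forall_mem measurableSet_Ioi fun r (hr : 0 < r) => ?_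
    have := cappedEnvelopeSq_nonneg (d := d) (ρ := ρ) hr.le
    rw [Real.norm_of_nonneg (by positivity)]
    exact pow_pred_mul_cappedEnvelopeSq_le hd hr.le

lemma setIntegral_Ioc_pow_pred_mul_cappedEnvelopeSq_le (hd : 1 ≤ d) (hρ : 0 ≤ ρ) :
    ∫ r in Ioc 0 ρ, r ^ (d - 1) * cappedEnvelopeSq d ρ r ≤ 2 * (1 + ρ) ^ (-(d : ℝ)) := by
  have hbound : ∀ r ∈ Ioc 0 ρ, r ^ (d - 1) * cappedEnvelopeSq d ρ r
      ≤ envelope d ρ * ((1 + r)⁻¹ * logWeight r ^ (-(1 / 2 : ℝ))) := by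
    rintro r ⟨hr, hrρ⟩
    have hpow : r ^ (d - 1) * (1 + r) ^ (-(d : ℝ)) ≤ (1 + r)⁻¹ := by
      simpa [← rpow_neg_one] using pow_pred_mul_one_add_rpow_neg_le hd hr.le d
    have := envelope_nonneg d hρ
    have := rpow_nonneg (logWeight_pos hr.le).le (-(1 / 2 : ℝ))
    calc r ^ (d - 1) * cappedEnvelopeSq d ρ r
        = envelope d ρ * (r ^ (d - 1) * (1 + r) ^ (-(d : ℝ))) * logWeight r ^ (-(1 / 2 : ℝ)) := by
          rw [cappedEnvelopeSq, max_eq_left hrρ, envelope.eq_1 d r]; ring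
      _ ≤ _ := by rw [mul_assoc]; gcongr
  have hint : IntegrableOn (fun r => (1 + r)⁻¹ * logWeight r ^ (-(1 / 2 : ℝ))) (Ioc 0 ρ) :=
    (continuousOn_inv_one_add_mul_logWeight_rpow.mono Icc_subset_Ici_self).integrableOn_Icc
      |>.mono_set Ioc_subset_Icc_self
  calc _ ≤ ∫ r in Ioc 0 ρ, envelope d ρ * ((1 + r)⁻¹ * logWeight r ^ (-(1 / 2 : ℝ))) := by
        refine integral_mono_of_nonneg (ae_restrict_of_forall_mem measurableSet_Ioc fun r hr => ?_)
          (hint.const_mul _) (ae_restrict_of_forall_mem measurableSet_Ioc hbound)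
        have := cappedEnvelopeSq_nonneg (d := d) (ρ := ρ) hr.1.le
        have := hr.1.le
        positivity
    _ = envelope d ρ * (2 * logWeight ρ ^ (1 / 2 : ℝ) - 2) := by
        rw [integral_const_mul, ← intervalIntegral.integral_of_le hρ,
          integral_inv_one_add_mul_logWeight_rpow hρ]
    _ ≤ 2 * (1 + ρ) ^ (-(d : ℝ)) := by
        have := envelope_nonneg d hρ
        rw [mul_sub, mul_left_comm, envelope_mul_rpow_logWeight d hρ]
        linarith

lemma setIntegral_Ioi_pow_pred_mul_cappedEnvelopeSq_le (hd : 1 ≤ d) (hρ : 0 ≤ ρ) :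
    ∫ r in Ioi ρ, r ^ (d - 1) * cappedEnvelopeSq d ρ r ≤ (1 + ρ) ^ (-(d : ℝ)) := by
  have hd' : (1 : ℝ) ≤ d := Nat.one_le_cast.2 hd
  calc _ ≤ ∫ r in Ioi ρ, (r + 1) ^ (-((d : ℝ) + 1)) := by
        refine integral_mono_of_nonneg
          (ae_restrict_of_forall_mem measurableSet_Ioi fun r (hr : ρ < r) => ?_)
          (integrableOn_add_rpow_Ioi_of_lt (by linarith) (by linarith))
          (ae_restrict_of_forall_mem measurableSet_Ioi fun r (hr : ρ < r) =>
            pow_pred_mul_cappedEnvelopeSq_le hd (hρ.trans hr.le))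
        have hr : 0 ≤ r := hρ.trans hr.le
        have := cappedEnvelopeSq_nonneg (d := d) (ρ := ρ) hr
        positivity
    _ = (1 + ρ) ^ (-(d : ℝ)) / d := by
        rw [integral_Ioi_add_rpow_of_lt (by linarith) (by linarith), add_comm ρ]
        ring_nf
    _ ≤ (1 + ρ) ^ (-(d : ℝ)) := div_le_self (by positivity) hd'

lemma setIntegral_Ioi_zero_pow_pred_mul_cappedEnvelopeSq_le (hd : 1 ≤ d) (hρ : 0 ≤ ρ) :
    ∫ r in Ioi 0, r ^ (d - 1) * cappedEnvelopeSq d ρ r ≤ 3 * (1 + ρ) ^ (-(d : ℝ)) := by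
  have hint := integrableOn_pow_pred_mul_cappedEnvelopeSq (ρ := ρ) hd
  rw [← Ioc_union_Ioi_eq_Ioi hρ, setIntegral_union Ioc_disjoint_Ioi_same measurableSet_Ioi
    (hint.mono_set Ioc_subset_Ioi_self) (hint.mono_set (Ioi_subset_Ioi hρ))]
  linarith [setIntegral_Ioc_pow_pred_mul_cappedEnvelopeSq_le hd hρ,
    setIntegral_Ioi_pow_pred_mul_cappedEnvelopeSq_le hd hρ]

end Profile

section Convolution

open Module

variable {E : Type*} [NormedAddCommGroup E]

lemma envelope_mul_envelope_le_of_norm_le (n : ℕ) {x y : E} (h : ‖y‖ ≤ ‖x - y‖) :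
    envelope n ‖x - y‖ * envelope n ‖y‖ ≤ cappedEnvelopeSq n (‖x‖ / 2) ‖y‖ := by
  have hx : ‖x‖ / 2 ≤ ‖x - y‖ := by linarith [norm_le_norm_add_norm_sub' x y]
  exact mul_le_mul_of_nonneg_right (envelope_antitoneOn n
    ((norm_nonneg y).trans (le_max_right _ _)) (norm_nonneg _) (max_le hx h))
    (envelope_nonneg n (norm_nonneg y))

lemma envelope_mul_envelope_le_add (n : ℕ) (x y : E) :
    envelope n ‖x - y‖ * envelope n ‖y‖
      ≤ cappedEnvelopeSq n (‖x‖ / 2) ‖y‖ + cappedEnvelopeSq n (‖x‖ / 2) ‖x - y‖ := by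
  rcases le_total ‖y‖ ‖x - y‖ with h | h
  · linarith [envelope_mul_envelope_le_of_norm_le n h,
      cappedEnvelopeSq_nonneg (d := n) (ρ := ‖x‖ / 2) (norm_nonneg (x - y))]
  · have := envelope_mul_envelope_le_of_norm_le n (x := x) (y := x - y) (by rwa [sub_sub_cancel])
    rw [sub_sub_cancel, mul_comm] at this
    linarith [cappedEnvelopeSq_nonneg (d := n) (ρ := ‖x‖ / 2) (norm_nonneg y)]

variable [NormedSpace ℝ E] [FiniteDimensional ℝ E] [MeasurableSpace E] [BorelSpace E]
  [Nontrivial E] (μ : Measure E) [μ.IsAddHaarMeasure]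

lemma integrable_cappedEnvelopeSq_norm (ρ : ℝ) :
    Integrable (fun y : E => cappedEnvelopeSq (finrank ℝ E) ρ ‖y‖) μ :=
  (integrable_fun_norm_addHaar μ).2 (integrableOn_pow_pred_mul_cappedEnvelopeSq finrank_pos)

lemma integral_cappedEnvelopeSq_norm_le {ρ : ℝ} (hρ : 0 ≤ ρ) :
    ∫ y, cappedEnvelopeSq (finrank ℝ E) ρ ‖y‖ ∂μ
      ≤ 3 * finrank ℝ E * μ.real (ball 0 1) * (1 + ρ) ^ (-(finrank ℝ E : ℝ)) := by
  rw [integral_fun_norm_addHaar μ (cappedEnvelopeSq _ ρ)]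
  simp only [nsmul_eq_mul, smul_eq_mul]
  have := setIntegral_Ioi_zero_pow_pred_mul_cappedEnvelopeSq_le
    (finrank_pos (R := ℝ) (M := E)) hρ
  calc _ ≤ (finrank ℝ E : ℝ) * μ.real (ball 0 1) * (3 * (1 + ρ) ^ (-(finrank ℝ E : ℝ))) := by
        rw [mul_assoc]; gcongr
    _ = _ := by ring

lemma integrable_envelope_mul_envelope (x : E) :
    Integrable (fun y => envelope (finrank ℝ E) ‖x - y‖ * envelope (finrank ℝ E) ‖y‖) μ := by
  have hh := integrable_cappedEnvelopeSq_norm μ (‖x‖ / 2)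
  refine (hh.add (hh.comp_sub_left x)).mono' ?_ (ae_of_all _ fun y => ?_)
  · have := measurable_envelope (finrank ℝ E)
    exact Measurable.aestronglyMeasurable (by fun_prop)
  · rw [Real.norm_of_nonneg (mul_nonneg (envelope_nonneg _ (norm_nonneg _))
      (envelope_nonneg _ (norm_nonneg _)))]
    exact envelope_mul_envelope_le_add _ x y

lemma integral_envelope_mul_envelope_le (x : E) :
    ∫ y, envelope (finrank ℝ E) ‖x - y‖ * envelope (finrank ℝ E) ‖y‖ ∂μ
      ≤ 6 * 2 ^ (finrank ℝ E : ℝ) * finrank ℝ E * μ.real (ball 0 1)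
        * (1 + ‖x‖) ^ (-(finrank ℝ E : ℝ)) := by
  set n := finrank ℝ E
  set h := fun y : E => cappedEnvelopeSq n (‖x‖ / 2) ‖y‖
  have hh : Integrable h μ := integrable_cappedEnvelopeSq_norm μ _
  calc _ ≤ ∫ y, h y + h (x - y) ∂μ :=
        integral_mono (integrable_envelope_mul_envelope μ x) (hh.add (hh.comp_sub_left x))
          (envelope_mul_envelope_le_add n x)
    _ = 2 * ∫ y, h y ∂μ := by
        rw [integral_add hh (hh.comp_sub_left x), integral_sub_left_eq_self h μ x]; ring
    _ ≤ 2 * (3 * n * μ.real (ball 0 1) * (1 + ‖x‖ / 2) ^ (-(n : ℝ))) := by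
        gcongr; exact integral_cappedEnvelopeSq_norm_le μ (by positivity)
    _ ≤ 2 * (3 * n * μ.real (ball 0 1) * (2 ^ (n : ℝ) * (1 + ‖x‖) ^ (-(n : ℝ)))) := by
        gcongr; exact one_add_half_rpow_neg_le (norm_nonneg x) (Nat.cast_nonneg n)
    _ = _ := by ring

lemma integrable_and_abs_integral_sub_mul_le {m : E → ℝ} (hm : Measurable m) {K : ℝ}
    (hmK : ∀ y, |m y| ≤ K * envelope (finrank ℝ E) ‖y‖) (x : E) :
    Integrable (fun y => m (x - y) * m y) μ ∧
      |∫ y, m (x - y) * m y ∂μ| ≤ 6 * 2 ^ (finrank ℝ E : ℝ) * finrank ℝ E * μ.real (ball 0 1)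
        * K ^ 2 * (1 + ‖x‖) ^ (-(finrank ℝ E : ℝ)) := by
  set n := finrank ℝ E
  have hbound : ∀ y, ‖m (x - y) * m y‖ ≤ K ^ 2 * (envelope n ‖x - y‖ * envelope n ‖y‖) := by
    intro y
    rw [Real.norm_eq_abs, abs_mul]
    calc |m (x - y)| * |m y| ≤ (K * envelope n ‖x - y‖) * (K * envelope n ‖y‖) :=
          mul_le_mul (hmK _) (hmK y) (abs_nonneg _) ((abs_nonneg _).trans (hmK _))
      _ = _ := by ring
  have hint := (integrable_envelope_mul_envelope μ x).const_mul (K ^ 2)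
  refine ⟨hint.mono' (by fun_prop) (ae_of_all _ hbound), ?_⟩
  calc |∫ y, m (x - y) * m y ∂μ| ≤ ∫ y, K ^ 2 * (envelope n ‖x - y‖ * envelope n ‖y‖) ∂μ :=
        norm_integral_le_of_norm_le hint (ae_of_all _ hbound)
    _ = K ^ 2 * ∫ y, envelope n ‖x - y‖ * envelope n ‖y‖ ∂μ := integral_const_mul _ _
    _ ≤ K ^ 2 * (6 * 2 ^ (n : ℝ) * n * μ.real (ball 0 1) * (1 + ‖x‖) ^ (-(n : ℝ))) := by
        gcongr; exact integral_envelope_mul_envelope_le μ x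
    _ = _ := by ring

end Convolution

/-- critical case β = d. If
`|m(x)| ≤ K (1+|x|)^{-d} (1+log(1+|x|))^{-1/2}`, then the convolution `m⋆m` is
absolutely convergent at every point and `|(m⋆m)(x)| ≤ C K² (1+|x|)^{-d}`. -/
theorem covariance_decay_critical (d : ℕ) (hd : 1 ≤ d) :
    ∃ C : ℝ, 0 < C ∧ ∀ K : ℝ, 0 < K →
      ∀ m : EuclideanSpace ℝ (Fin d) → ℝ, Measurable m →
        (∀ x, |m x| ≤ K * (1 + ‖x‖) ^ (-(d : ℝ)) *
          (1 + Real.log (1 + ‖x‖)) ^ (-(1/2 : ℝ))) →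
        ∀ x : EuclideanSpace ℝ (Fin d),
          Integrable (fun y => m (x - y) * m y) ∧
          |∫ y, m (x - y) * m y| ≤ C * K ^ 2 * (1 + ‖x‖) ^ (-(d : ℝ)) := by
  have : Nontrivial (EuclideanSpace ℝ (Fin d)) :=
    Module.nontrivial_of_finrank_pos (R := ℝ) (by rw [finrank_euclideanSpace_fin]; omega)
  have hball : 0 < volume.real (ball (0 : EuclideanSpace ℝ (Fin d)) 1) :=
    ENNReal.toReal_pos (measure_ball_pos volume 0 one_pos).ne' measure_ball_lt_top.ne
  refine ⟨6 * 2 ^ (d : ℝ) * d * volume.real (ball (0 : EuclideanSpace ℝ (Fin d)) 1),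
    by positivity, fun K _ m hm hmK x => ?_⟩
  simpa only [finrank_euclideanSpace_fin] using
    integrable_and_abs_integral_sub_mul_le volume hm (K := K)
      (by simpa only [finrank_euclideanSpace_fin, envelope, logWeight, mul_assoc] using hmK) x
end

section
/- Let d ≥ 1 and β > d. There is a constant C = C(d, β) such that for all reals L ≥ 1 and R > 0, and all n, n' ∈ ℤ^d with |n|_∞ ≥ L + R L^{d/β}, one has Σ_{k ∈ ℤ^d, |k|_∞ ≤ L} (1+|n−k|)^{−β} (1+|n'−k|)^{−β} ≤ C R^{−β} L^{−d}. -/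
/-!
For `|k|_∞ ≤ L` the triangle inequality gives `|n - k| ≥ |n - k|_∞ ≥ R L^{d/β}`, so the first
factor is at most `(R L^{d/β})^{-β} = R^{-β} L^{-d}` uniformly in `k`. The remaining sum
`Σ_k (1 + |n' - k|)^{-β}` is at most `C = Σ_{ℤ^d} (1 + |k|)^{-β}`, which is finite for `β > d`:
since `∏ᵢ (1 + |kᵢ|) ≤ (1 + |k|)^d`, it is dominated by the `d`-th power of the one-dimensional
series `Σ_j (1 + |j|)^{-β/d}`.
-/

/-- Euclidean norm of a lattice point of `ℤ^d`. -/
noncomputable def zEucNorm {d : ℕ} (n : Fin d → ℤ) : ℝ :=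
  Real.sqrt (∑ i, ((n i : ℝ)) ^ 2)

/-- ℓ∞ norm of a lattice point of `ℤ^d`. -/
noncomputable def zSupNorm {d : ℕ} (n : Fin d → ℤ) : ℝ :=
  ((Finset.univ.sup fun i => (n i).natAbs : ℕ) : ℝ)

open Finset Function

theorem summable_one_add_abs_int_rpow_neg {b : ℝ} (hb : 1 < b) :
    Summable fun j : ℤ => (1 + |(j : ℝ)|) ^ (-b) := by
  have hnat : Summable fun m : ℕ => (1 + (m : ℝ)) ^ (-b) := by
    simpa [add_comm] using
      (summable_nat_add_iff 1).mpr (Real.summable_nat_rpow.mpr (neg_lt_neg hb))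
  exact .of_nat_of_neg (by simpa using hnat) (by simpa using hnat)

theorem summable_prod_apply_of_nonneg {ι α : Type*} [Fintype ι] {g : α → ℝ} (hg0 : 0 ≤ g)
    (hg : Summable g) : Summable fun k : ι → α => ∏ i, g (k i) := by
  classical
  refine summable_of_sum_le (c := (∑' a, g a) ^ Fintype.card ι)
    (fun k => prod_nonneg fun i _ => hg0 _) fun s => ?_
  calc ∑ k ∈ s, ∏ i, g (k i)
      ≤ ∑ k ∈ Fintype.piFinset fun i => s.image (· i), ∏ i, g (k i) :=
        sum_le_sum_of_subset_of_nonneg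
          (fun k hk => Fintype.mem_piFinset.2 fun i => mem_image_of_mem _ hk)
          fun k _ _ => prod_nonneg fun i _ => hg0 _
    _ = ∏ i, ∑ a ∈ s.image (· i), g a := (prod_univ_sum _ _).symm
    _ ≤ ∏ _i : ι, ∑' a, g a :=
        prod_le_prod (fun i _ => sum_nonneg fun a _ => hg0 a)
          fun i _ => hg.sum_le_tsum _ fun a _ => hg0 a
    _ = (∑' a, g a) ^ Fintype.card ι := by simp

theorem zEucNorm_nonneg {d : ℕ} (n : Fin d → ℤ) : 0 ≤ zEucNorm n := Real.sqrt_nonneg _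

theorem one_add_zEucNorm_pos {d : ℕ} (n : Fin d → ℤ) : 0 < 1 + zEucNorm n := by
  linarith [zEucNorm_nonneg n]

theorem abs_apply_le_zEucNorm {d : ℕ} (n : Fin d → ℤ) (i : Fin d) :
    |(n i : ℝ)| ≤ zEucNorm n := by
  rw [← Real.sqrt_sq_eq_abs]
  exact Real.sqrt_le_sqrt (single_le_sum (fun j _ => sq_nonneg (n j : ℝ)) (mem_univ i))

theorem zSupNorm_le_zEucNorm {d : ℕ} (n : Fin d → ℤ) : zSupNorm n ≤ zEucNorm n := by
  refine (Nat.cast_le.2 (Finset.sup_le fun i _ => Nat.le_floor ?_)).trans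
    (Nat.floor_le (zEucNorm_nonneg n))
  simpa [Nat.cast_natAbs] using abs_apply_le_zEucNorm n i

theorem zSupNorm_le_zSupNorm_sub_add {d : ℕ} (n k : Fin d → ℤ) :
    zSupNorm n ≤ zSupNorm (n - k) + zSupNorm k := by
  unfold zSupNorm
  rw [← Nat.cast_add, Nat.cast_le]
  refine Finset.sup_le fun i _ => ?_
  calc (n i).natAbs ≤ (n i - k i).natAbs + (k i).natAbs := by
        simpa using Int.natAbs_add_le (n i - k i) (k i)
    _ ≤ _ := add_le_add (le_sup (f := fun i => ((n - k) i).natAbs) (mem_univ i))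
        (le_sup (f := fun i => (k i).natAbs) (mem_univ i))

theorem one_add_zEucNorm_rpow_neg_le_prod {d : ℕ} (hd : d ≠ 0) {β : ℝ} (hβ : 0 ≤ β)
    (k : Fin d → ℤ) :
    (1 + zEucNorm k) ^ (-β) ≤ ∏ i, (1 + |(k i : ℝ)|) ^ (-(β / d)) := by
  have hprod : ∏ i, (1 + |(k i : ℝ)|) ≤ (1 + zEucNorm k) ^ d := by
    simpa using prod_le_prod (s := univ) (fun i _ => by positivity)
      fun i _ => (add_le_add_iff_left 1).2 (abs_apply_le_zEucNorm k i)
  calc (1 + zEucNorm k) ^ (-β) = ((1 + zEucNorm k) ^ d) ^ (-(β / d)) := by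
        rw [← Real.rpow_natCast, ← Real.rpow_mul (one_add_zEucNorm_pos k).le]
        field_simp
    _ ≤ (∏ i, (1 + |(k i : ℝ)|)) ^ (-(β / d)) :=
        Real.rpow_le_rpow_of_nonpos (prod_pos fun i _ => by positivity) hprod
          (neg_nonpos.2 (by positivity))
    _ = ∏ i, (1 + |(k i : ℝ)|) ^ (-(β / d)) :=
        (Real.finsetProd_rpow _ _ (fun i _ => by positivity) _).symm

theorem summable_one_add_zEucNorm_rpow_neg {d : ℕ} {β : ℝ} (hβ : (d : ℝ) < β) :
    Summable fun k : Fin d → ℤ => (1 + zEucNorm k) ^ (-β) := by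
  rcases eq_or_ne d 0 with rfl | hd
  · exact .of_finite
  have hd0 : (0 : ℝ) < d := by positivity
  have hprod := summable_prod_apply_of_nonneg (ι := Fin d) (fun j => by positivity)
    (summable_one_add_abs_int_rpow_neg ((one_lt_div hd0).2 hβ))
  exact hprod.of_nonneg_of_le (fun k => (Real.rpow_pos_of_pos (one_add_zEucNorm_pos k) _).le)
    (one_add_zEucNorm_rpow_neg_le_prod hd (hd0.le.trans hβ.le))

theorem le_zEucNorm_sub_of_add_le_zSupNorm {d : ℕ} {n k : Fin d → ℤ} {L D : ℝ}
    (hn : L + D ≤ zSupNorm n) (hk : zSupNorm k ≤ L) : D ≤ zEucNorm (n - k) := by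
  linarith [zSupNorm_le_zSupNorm_sub_add n k, zSupNorm_le_zEucNorm (n - k)]

theorem one_add_zEucNorm_sub_rpow_neg_le {d : ℕ} {β L R : ℝ} (hβ : 0 < β) (hL : 0 < L)
    (hR : 0 < R) {n k : Fin d → ℤ} (hn : L + R * L ^ ((d : ℝ) / β) ≤ zSupNorm n)
    (hk : zSupNorm k ≤ L) :
    (1 + zEucNorm (n - k)) ^ (-β) ≤ R ^ (-β) * L ^ (-(d : ℝ)) := by
  have hD : 0 < R * L ^ ((d : ℝ) / β) := by positivity
  calc (1 + zEucNorm (n - k)) ^ (-β) ≤ (R * L ^ ((d : ℝ) / β)) ^ (-β) :=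
        Real.rpow_le_rpow_of_nonpos hD
          (by linarith [le_zEucNorm_sub_of_add_le_zSupNorm hn hk]) (by linarith)
    _ = R ^ (-β) * L ^ (-(d : ℝ)) := by
        rw [Real.mul_rpow hR.le (by positivity), ← Real.rpow_mul hL.le]
        field_simp

theorem farfield_covariance_sum_bound_general (d : ℕ) (β : ℝ)
    (hβ : (d : ℝ) < β) :
    ∃ C : ℝ, 0 < C ∧ ∀ L R : ℝ, 1 ≤ L → 0 < R →
      ∀ n n' : Fin d → ℤ, L + R * L ^ ((d : ℝ) / β) ≤ zSupNorm n →
        Summable (fun k : {k : Fin d → ℤ // zSupNorm k ≤ L} =>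
          (1 + zEucNorm (n - k.1)) ^ (-β) * (1 + zEucNorm (n' - k.1)) ^ (-β)) ∧
        (∑' k : {k : Fin d → ℤ // zSupNorm k ≤ L},
          (1 + zEucNorm (n - k.1)) ^ (-β) * (1 + zEucNorm (n' - k.1)) ^ (-β)) ≤
          C * R ^ (-β) * L ^ (-(d : ℝ)) := by
  set f : (Fin d → ℤ) → ℝ := fun k => (1 + zEucNorm k) ^ (-β)
  have hf : Summable f := summable_one_add_zEucNorm_rpow_neg hβ
  have hf0 (k : Fin d → ℤ) : 0 ≤ f k := (Real.rpow_pos_of_pos (one_add_zEucNorm_pos k) _).le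
  refine ⟨∑' k, f k, hf.tsum_pos hf0 0 (Real.rpow_pos_of_pos (one_add_zEucNorm_pos 0) _),
    fun L R hL hR n n' hn => ?_⟩
  have hβ0 : 0 < β := d.cast_nonneg.trans_lt hβ
  set A := R ^ (-β) * L ^ (-(d : ℝ))
  have hfar (k : {k : Fin d → ℤ // zSupNorm k ≤ L}) : f (n - k.1) ≤ A :=
    one_add_zEucNorm_sub_rpow_neg_le hβ0 (by linarith) hR hn k.2
  have hinj : Injective fun k : {k : Fin d → ℤ // zSupNorm k ≤ L} => n' - k.1 :=
    fun _ _ h => Subtype.ext (sub_right_injective h)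
  have hnear : Summable fun k : {k : Fin d → ℤ // zSupNorm k ≤ L} => A * f (n' - k.1) :=
    (hf.comp_injective hinj).mul_left A
  have hterm (k : {k : Fin d → ℤ // zSupNorm k ≤ L}) :
      f (n - k.1) * f (n' - k.1) ≤ A * f (n' - k.1) :=
    mul_le_mul_of_nonneg_right (hfar k) (hf0 _)
  have hsum := hnear.of_nonneg_of_le (fun k => mul_nonneg (hf0 _) (hf0 _)) hterm
  refine ⟨hsum, ?_⟩
  calc _ ≤ ∑' k : {k : Fin d → ℤ // zSupNorm k ≤ L}, A * f (n' - k.1) :=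
        hsum.tsum_le_tsum hterm hnear
    _ = A * ∑' k : {k : Fin d → ℤ // zSupNorm k ≤ L}, f (n' - k.1) := tsum_mul_left
    _ ≤ A * ∑' k, f k :=
        mul_le_mul_of_nonneg_left (tsum_comp_le_tsum_of_inj hf hf0 hinj) (by positivity)
    _ = (∑' k, f k) * R ^ (-β) * L ^ (-(d : ℝ)) := by ring

/-- far-field covariance sum bound. For `β > d` there is
`C = C(d, β)` such that for `L ≥ 1`, `R > 0` and `|n|_∞ ≥ L + R L^{d/β}`,
`Σ_{|k|_∞ ≤ L} (1+|n-k|)^{-β}(1+|n'-k|)^{-β} ≤ C R^{-β} L^{-d}`. -/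
theorem farfield_covariance_sum_bound (d : ℕ) (hd : 1 ≤ d) (β : ℝ)
    (hβ : (d : ℝ) < β) :
    ∃ C : ℝ, 0 < C ∧ ∀ L R : ℝ, 1 ≤ L → 0 < R →
      ∀ n n' : Fin d → ℤ, L + R * L ^ ((d : ℝ) / β) ≤ zSupNorm n →
        Summable (fun k : {k : Fin d → ℤ // zSupNorm k ≤ L} =>
          (1 + zEucNorm (n - k.1)) ^ (-β) * (1 + zEucNorm (n' - k.1)) ^ (-β)) ∧
        (∑' k : {k : Fin d → ℤ // zSupNorm k ≤ L},
          (1 + zEucNorm (n - k.1)) ^ (-β) * (1 + zEucNorm (n' - k.1)) ^ (-β)) ≤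
          C * R ^ (-β) * L ^ (-(d : ℝ)) :=
  farfield_covariance_sum_bound_general d β hβ
end
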